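/- arXiv:2505.15568 — 3 statements merged into one kernel-verified Lean document; each statement's English description precedes it below -/
import Mathlib

section
/- History-variable extension lemma (Spec_S implements Spec_{S'}): for every behavior σ : ℕ → states with σ 0 ∈ Init such that for every i the pair (σ i, σ (i+1)) is a NextI step, an AdvanceTime_S step, or a stuttering step, there exists a behavior σ' of extended states with σ' 0 ∈ Init', st (σ' i) = σ i for every i, and such that for every i the pair (σ' i, σ' (i+1)) is a NextI' step, an AdvanceTime' step, or a stuttering step. -/
open scoped Classical

universe u v

/-- A state of an explicit real-time system: a non-clock component and the clock values. -/
structure RTState (α : Type u) (𝒳 : Type v) where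
  core : α
  clk : 𝒳 → ℕ

/-- An extended state: an underlying state together with the mapped-clock values. -/
structure RTEState (α : Type u) (𝒳 : Type v) where
  st : RTState α 𝒳
  m : 𝒳 → ℕ

namespace RT

variable {α : Type u} {𝒳 : Type v}

/-- `T x d s`: the state agreeing with `s` except that clock `x` has value `d`. -/
noncomputable def T (x : 𝒳) (d : ℕ) (s : RTState α 𝒳) : RTState α 𝒳 :=
  ⟨s.core, fun y => if y = x then d else s.clk y⟩

/-- `𝒯^x_d` applied pointwise to a behavior. -/
noncomputable def Tb (x : 𝒳) (d : ℕ) (σ : ℕ → RTState α 𝒳) : ℕ → RTState α 𝒳 :=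
  fun i => T x d (σ i)

/-- `N_S`: behaviors each of whose steps is a `NextI` step or a stuttering step. -/
def NS (NextI : RTState α 𝒳 → RTState α 𝒳 → Prop) : Set (ℕ → RTState α 𝒳) :=
  { σ | ∀ i, NextI (σ i) (σ (i + 1)) ∨ σ (i + 1) = σ i }

/-- `AdvanceTime_S`: all clocks advance by one, provided no time bound is hit. -/
def AdvanceTimeS (B : 𝒳 → RTState α 𝒳 → Set ℕ) (s t : RTState α 𝒳) : Prop :=
  t.core = s.core ∧ (∀ x, t.clk x = s.clk x + 1) ∧ ∀ x, s.clk x ∉ B x s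

/-- `ETP^x(s)`: points in time at which a newly possible behavior for state `s` exists. -/
def ETP (NextI : RTState α 𝒳 → RTState α 𝒳 → Prop) (x : 𝒳) (s : RTState α 𝒳) :
    Set ℕ :=
  { t | 1 ≤ t ∧ ∃ σ ∈ NS NextI, σ 0 = T x t s ∧ Tb x (t - 1) σ ∉ NS NextI }

/-- `AdvanceTime_Ŝ`: the time-optimized advance-time action. -/
def AdvanceTimeHat (B relETP : 𝒳 → RTState α 𝒳 → Set ℕ) (s t : RTState α 𝒳) : Prop :=
  t.core = s.core ∧ (∃ x, s.clk x < t.clk x) ∧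
    (∀ x, t.clk x = s.clk x ∨ (s.clk x < t.clk x ∧ t.clk x ∈ relETP x s)) ∧
    ∀ x, ∀ b ∈ B x s, s.clk x ≤ b → t.clk x ≤ b

/-- `Init'`: initial extended states, with mapped clocks equal to the clocks. -/
def EInit (Init : Set (RTState α 𝒳)) : Set (RTEState α 𝒳) :=
  { s' | s'.st ∈ Init ∧ ∀ x, s'.m x = s'.st.clk x }

/-- `NextI'`: internal step of the extended system, mapped clocks unchanged. -/
def ENextI (NextI : RTState α 𝒳 → RTState α 𝒳 → Prop) (s' t' : RTEState α 𝒳) : Prop :=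
  NextI s'.st t'.st ∧ ∀ x, t'.m x = s'.m x

/-- `AdvanceTime'`: extended advance-time step, updating the mapped clocks. -/
def EAdvanceTime (B relETP : 𝒳 → RTState α 𝒳 → Set ℕ) (s' t' : RTEState α 𝒳) : Prop :=
  AdvanceTimeS B s'.st t'.st ∧
    ∀ x, t'.m x = sSup ({s'.m x} ∪ { n ∈ relETP x s'.st | n ≤ t'.st.clk x })

/-- `T'^x_d`: set clock `x` of the underlying state to `d`; mapped clocks unchanged. -/
noncomputable def ET (x : 𝒳) (d : ℕ) (s' : RTEState α 𝒳) : RTEState α 𝒳 :=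
  ⟨T x d s'.st, s'.m⟩

/-- `𝒯'^x_d` applied pointwise to a behavior of extended states. -/
noncomputable def ETb (x : 𝒳) (d : ℕ) (σ : ℕ → RTEState α 𝒳) : ℕ → RTEState α 𝒳 :=
  fun i => ET x d (σ i)

/-- `N_{S'}`: extended behaviors in which every step is a `NextI'` step or stuttering. -/
def ENS (NextI : RTState α 𝒳 → RTState α 𝒳 → Prop) : Set (ℕ → RTEState α 𝒳) :=
  { σ | ∀ i, ENextI NextI (σ i) (σ (i + 1)) ∨ σ (i + 1) = σ i }

/-- `n^x(s')`, an element of `ℕ∞` (`sInf ∅ = ⊤`), with truncated subtraction on `ℕ`. -/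
noncomputable def nfun (NextI : RTState α 𝒳 → RTState α 𝒳 → Prop) (x : 𝒳)
    (s' : RTEState α 𝒳) : ℕ∞ :=
  sInf ((fun n : ℕ => (n : ℕ∞)) ''
    { n : ℕ | ∃ σ ∈ ENS NextI, σ 0 = ET x (s'.st.clk x - n) s' ∧
        ETb x (s'.st.clk x - n - 1) σ ∉ ENS NextI })

/-- The invariant `Inv`: `s'.x ≤ s'.m^x + n^x(s')` in `ℕ∞` for every clock `x`. -/
def Inv (NextI : RTState α 𝒳 → RTState α 𝒳 → Prop) (s' : RTEState α 𝒳) : Prop :=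
  ∀ x, (s'.st.clk x : ℕ∞) ≤ (s'.m x : ℕ∞) + nfun NextI x s'

/-- `bar(s')`: the state with the core of `st s'` and every clock set to its mapped value. -/
def bar (s' : RTEState α 𝒳) : RTState α 𝒳 :=
  ⟨s'.st.core, s'.m⟩

/-- A step of the extended system: `NextI'`, `AdvanceTime'`, or stuttering. -/
def EStep (NextI : RTState α 𝒳 → RTState α 𝒳 → Prop)
    (B relETP : 𝒳 → RTState α 𝒳 → Set ℕ) (s' t' : RTEState α 𝒳) : Prop :=
  ENextI NextI s' t' ∨ EAdvanceTime B relETP s' t' ∨ t' = s'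

/-- An extended state is reachable iff it arises from `Init'` by finitely many steps. -/
def EReachable (Init : Set (RTState α 𝒳)) (NextI : RTState α 𝒳 → RTState α 𝒳 → Prop)
    (B relETP : 𝒳 → RTState α 𝒳 → Set ℕ) (s' : RTEState α 𝒳) : Prop :=
  ∃ i ∈ EInit Init, Relation.ReflTransGen (EStep NextI B relETP) i s'

/-- Replace the values of the clocks in the set `Y` by their mapped-clock values. -/
noncomputable def replaceClocks (Y : Set 𝒳) (s' : RTEState α 𝒳) : RTEState α 𝒳 :=
  ⟨⟨s'.st.core, fun x => if x ∈ Y then s'.m x else s'.st.clk x⟩, s'.m⟩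

end RT

/-! The mapped clocks are a history variable: they depend only on the past of the behavior, so
they can be computed along `σ` by recursion, starting from the clocks of `σ 0`, updated by the
formula of `AdvanceTime'` at each `AdvanceTime_S` step and kept unchanged at all other steps. -/

namespace RT

variable {α : Type u} {𝒳 : Type v}

noncomputable def advanceMapped (relETP : 𝒳 → RTState α 𝒳 → Set ℕ) (s t : RTState α 𝒳)
    (m : 𝒳 → ℕ) : 𝒳 → ℕ :=
  fun x => sSup ({m x} ∪ { n ∈ relETP x s | n ≤ t.clk x })

noncomputable def mappedClocks (B relETP : 𝒳 → RTState α 𝒳 → Set ℕ) (σ : ℕ → RTState α 𝒳) :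
    ℕ → 𝒳 → ℕ
  | 0 => (σ 0).clk
  | i + 1 =>
    if AdvanceTimeS B (σ i) (σ (i + 1)) then
      advanceMapped relETP (σ i) (σ (i + 1)) (mappedClocks B relETP σ i)
    else mappedClocks B relETP σ i

noncomputable def historyExtension (B relETP : 𝒳 → RTState α 𝒳 → Set ℕ)
    (σ : ℕ → RTState α 𝒳) (i : ℕ) : RTEState α 𝒳 :=
  ⟨σ i, mappedClocks B relETP σ i⟩

section

variable {Init : Set (RTState α 𝒳)} {NextI : RTState α 𝒳 → RTState α 𝒳 → Prop}
  {B relETP : 𝒳 → RTState α 𝒳 → Set ℕ} {σ : ℕ → RTState α 𝒳}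

@[simp]
theorem historyExtension_st (i : ℕ) : (historyExtension B relETP σ i).st = σ i :=
  rfl

theorem historyExtension_zero_mem_eInit (hI : σ 0 ∈ Init) :
    historyExtension B relETP σ 0 ∈ EInit Init :=
  ⟨hI, fun _ => rfl⟩

theorem eNextI_mk {s t : RTState α 𝒳} (h : NextI s t) (m : 𝒳 → ℕ) :
    ENextI NextI ⟨s, m⟩ ⟨t, m⟩ :=
  ⟨h, fun _ => rfl⟩

theorem eAdvanceTime_mk {s t : RTState α 𝒳} (h : AdvanceTimeS B s t) (m : 𝒳 → ℕ) :
    EAdvanceTime B relETP ⟨s, m⟩ ⟨t, advanceMapped relETP s t m⟩ :=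
  ⟨h, fun _ => rfl⟩

theorem mappedClocks_succ_of_advanceTimeS {i : ℕ} (h : AdvanceTimeS B (σ i) (σ (i + 1))) :
    mappedClocks B relETP σ (i + 1) =
      advanceMapped relETP (σ i) (σ (i + 1)) (mappedClocks B relETP σ i) :=
  if_pos h

theorem mappedClocks_succ_of_not_advanceTimeS {i : ℕ}
    (h : ¬AdvanceTimeS B (σ i) (σ (i + 1))) :
    mappedClocks B relETP σ (i + 1) = mappedClocks B relETP σ i :=
  if_neg h

theorem eStep_historyExtension {i : ℕ}
    (hstep : NextI (σ i) (σ (i + 1)) ∨ AdvanceTimeS B (σ i) (σ (i + 1)) ∨ σ (i + 1) = σ i) :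
    EStep NextI B relETP (historyExtension B relETP σ i)
      (historyExtension B relETP σ (i + 1)) := by
  unfold historyExtension
  by_cases hadv : AdvanceTimeS B (σ i) (σ (i + 1))
  · have hm := mappedClocks_succ_of_advanceTimeS (relETP := relETP) hadv
    exact Or.inr (Or.inl (hm ▸ eAdvanceTime_mk hadv _))
  · have hm := mappedClocks_succ_of_not_advanceTimeS (relETP := relETP) hadv
    rcases hstep with hnext | hadv' | hstutter
    · exact Or.inl (hm ▸ eNextI_mk hnext _)
    · exact absurd hadv' hadv
    · exact Or.inr (Or.inr (by rw [hstutter, hm]))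

end

end RT

theorem history_variable_extension_general {α : Type u} {𝒳 : Type v}
    (Init : Set (RTState α 𝒳)) (NextI : RTState α 𝒳 → RTState α 𝒳 → Prop)
    (B relETP : 𝒳 → RTState α 𝒳 → Set ℕ)
    (σ : ℕ → RTState α 𝒳) (hI : σ 0 ∈ Init)
    (hσ : ∀ i, NextI (σ i) (σ (i + 1)) ∨ RT.AdvanceTimeS B (σ i) (σ (i + 1)) ∨
      σ (i + 1) = σ i) :
    ∃ σ' : ℕ → RTEState α 𝒳, σ' 0 ∈ RT.EInit Init ∧ (∀ i, (σ' i).st = σ i) ∧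
      ∀ i, RT.ENextI NextI (σ' i) (σ' (i + 1)) ∨
        RT.EAdvanceTime B relETP (σ' i) (σ' (i + 1)) ∨ σ' (i + 1) = σ' i :=
  ⟨RT.historyExtension B relETP σ, RT.historyExtension_zero_mem_eInit hI,
    RT.historyExtension_st, fun i => RT.eStep_historyExtension (hσ i)⟩

theorem history_variable_extension {α : Type u} {𝒳 : Type v}
    (Init : Set (RTState α 𝒳)) (NextI : RTState α 𝒳 → RTState α 𝒳 → Prop)
    (B relETP : 𝒳 → RTState α 𝒳 → Set ℕ)
    (hClk : ∀ s t, NextI s t → ∀ x, t.clk x = s.clk x)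
    (σ : ℕ → RTState α 𝒳) (hI : σ 0 ∈ Init)
    (hσ : ∀ i, NextI (σ i) (σ (i + 1)) ∨ RT.AdvanceTimeS B (σ i) (σ (i + 1)) ∨
      σ (i + 1) = σ i) :
    ∃ σ' : ℕ → RTEState α 𝒳, σ' 0 ∈ RT.EInit Init ∧ (∀ i, (σ' i).st = σ i) ∧
      ∀ i, RT.ENextI NextI (σ' i) (σ' (i + 1)) ∨
        RT.EAdvanceTime B relETP (σ' i) (σ' (i + 1)) ∨ σ' (i + 1) = σ' i :=
  history_variable_extension_general Init NextI B relETP σ hI hσ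
end

section
/- Theorem (Spec_{S'} implements the barred time-optimized specification, safety part): suppose Assumptions 1, 2, 3 and 4 hold and the index type 𝒳 of clocks is finite. For every behavior σ' of extended states with σ' 0 ∈ Init' such that for every i the pair (σ' i, σ' (i+1)) is a NextI' step, an AdvanceTime' step, or a stuttering step, the projected behavior i ↦ bar(σ' i) satisfies: bar(σ' 0) ∈ Init, and for every i the pair (bar(σ' i), bar(σ' (i+1))) is a NextI step, an AdvanceTime_Ŝ step, or a stuttering step. -/
/-! The mapped clock `m^x` lags behind clock `x`, but never behind a relevant early time point
that `x` has already reached (`MappedClockInv`); every step of the extended system preserves this.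
Since `ETP ⊆ relETP`, no value in `(m^x, x]` is an early time point, so the clocks can be lowered
one unit at a time to their mapped values without destroying any `NextI`-behavior: a `NextI'`
step therefore projects to a `NextI` or stuttering step of the barred states. On an
`AdvanceTime'` step, `m^x` only jumps to relevant early time points, and never past a time bound. -/

open scoped Classical

universe u v

section SupSingletonUnion

variable {a k : ℕ} {R : Set ℕ}

theorem bddAbove_singleton_union_sep : BddAbove ({a} ∪ {n ∈ R | n ≤ k}) :=
  ⟨max a k, by rintro n (rfl | ⟨-, hn⟩) <;> simp [*]⟩

theorem sSup_singleton_union_sep_le_iff {b : ℕ} :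
    sSup ({a} ∪ {n ∈ R | n ≤ k}) ≤ b ↔ a ≤ b ∧ ∀ n ∈ R, n ≤ k → n ≤ b := by
  rw [csSup_le_iff bddAbove_singleton_union_sep ⟨a, Or.inl rfl⟩]
  simp only [Set.mem_union, Set.mem_singleton_iff, Set.mem_sep_iff, or_imp, forall_and,
    forall_eq, and_imp]

theorem sSup_singleton_union_sep_eq_or_mem :
    sSup ({a} ∪ {n ∈ R | n ≤ k}) = a ∨ sSup ({a} ∪ {n ∈ R | n ≤ k}) ∈ R :=
  (Nat.sSup_mem ⟨a, Or.inl rfl⟩ bddAbove_singleton_union_sep).imp id And.left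

end SupSingletonUnion

theorem RTState.ext {α : Type u} {𝒳 : Type v} {s t : RTState α 𝒳} (hcore : s.core = t.core)
    (hclk : s.clk = t.clk) : s = t := by
  cases s; cases t; simp_all

namespace RT

variable {α : Type u} {𝒳 : Type v}

noncomputable def setClocks (Y : Set 𝒳) (m : 𝒳 → ℕ) (s : RTState α 𝒳) : RTState α 𝒳 :=
  ⟨s.core, Y.piecewise m s.clk⟩

theorem T_T (x : 𝒳) (d e : ℕ) (s : RTState α 𝒳) : T x e (T x d s) = T x e s := by
  refine RTState.ext rfl (funext fun y => ?_)
  by_cases h : y = x <;> simp [T, h]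

theorem T_eq_self {x : 𝒳} {d : ℕ} {s : RTState α 𝒳} (h : s.clk x = d) : T x d s = s := by
  refine RTState.ext rfl (funext fun y => ?_)
  by_cases hy : y = x
  · subst hy; simp [T, h]
  · simp [T, hy]

theorem Tb_Tb (x : 𝒳) (d e : ℕ) (σ : ℕ → RTState α 𝒳) : Tb x e (Tb x d σ) = Tb x e σ :=
  funext fun _ => T_T x d e _

theorem setClocks_empty (m : 𝒳 → ℕ) (s : RTState α 𝒳) : setClocks ∅ m s = s := by
  simp [setClocks]

theorem setClocks_univ (m : 𝒳 → ℕ) (s : RTState α 𝒳) : setClocks Set.univ m s = ⟨s.core, m⟩ := by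
  simp [setClocks]

theorem setClocks_insert (x : 𝒳) (Y : Set 𝒳) (m : 𝒳 → ℕ) (s : RTState α 𝒳) :
    setClocks (insert x Y) m s = T x (m x) (setClocks Y m s) := by
  refine RTState.ext rfl (funext fun y => ?_)
  simp [setClocks, T, Set.piecewise_insert, Function.update_apply]

variable {NextI : RTState α 𝒳 → RTState α 𝒳 → Prop}

theorem clk_eq_of_mem_NS (hClk : ∀ s t, NextI s t → ∀ x, t.clk x = s.clk x)
    {σ : ℕ → RTState α 𝒳} (hσ : σ ∈ NS NextI) (i : ℕ) (x : 𝒳) :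
    (σ i).clk x = (σ 0).clk x := by
  induction i with
  | zero => rfl
  | succ i ih =>
    rcases hσ i with h | h
    · rw [hClk _ _ h x, ih]
    · rw [h, ih]

theorem Tb_pred_mem_NS {σ : ℕ → RTState α 𝒳} {x : 𝒳} {d : ℕ} (hd : 1 ≤ d)
    (hσ : Tb x d σ ∈ NS NextI) (hETP : d ∉ ETP NextI x (σ 0)) :
    Tb x (d - 1) σ ∈ NS NextI := by
  by_contra h
  exact hETP ⟨hd, Tb x d σ, hσ, rfl, by rwa [Tb_Tb]⟩

theorem Tb_mem_NS_of_le {σ : ℕ → RTState α 𝒳} {x : 𝒳} {a c : ℕ} (hac : a ≤ c)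
    (hσ : Tb x c σ ∈ NS NextI) (hETP : ∀ d, a < d → d ≤ c → d ∉ ETP NextI x (σ 0)) :
    Tb x a σ ∈ NS NextI := by
  induction c, hac using Nat.le_induction with
  | base => exact hσ
  | succ c hac ih =>
    exact ih (Tb_pred_mem_NS (by omega) hσ (hETP _ (by omega) le_rfl))
      fun d h₁ h₂ => hETP d h₁ (by omega)

theorem setClocks_mem_NS (hClk : ∀ s t, NextI s t → ∀ x, t.clk x = s.clk x)
    {σ : ℕ → RTState α 𝒳} (hσ : σ ∈ NS NextI) {m : 𝒳 → ℕ} (hm : ∀ x, m x ≤ (σ 0).clk x)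
    (hETP : ∀ Y x d, m x < d → d ≤ (σ 0).clk x → d ∉ ETP NextI x (setClocks Y m (σ 0)))
    {Y : Set 𝒳} (hY : Y.Finite) : (fun i => setClocks Y m (σ i)) ∈ NS NextI := by
  induction Y, hY using Set.Finite.induction_on with
  | empty => simpa only [setClocks_empty] using hσ
  | @insert x Y hx _ ih =>
    have hclk : ∀ i, (setClocks Y m (σ i)).clk x = (σ 0).clk x := fun i => by
      simp only [setClocks, Set.piecewise_eq_of_notMem _ _ _ hx, clk_eq_of_mem_NS hClk hσ i x]
    have hfix : Tb x ((σ 0).clk x) (fun i => setClocks Y m (σ i)) = fun i => setClocks Y m (σ i) :=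
      funext fun i => T_eq_self (hclk i)
    simp only [setClocks_insert]
    exact Tb_mem_NS_of_le (hm x) (by rwa [hfix]) (hETP Y x)

variable {B relETP : 𝒳 → RTState α 𝒳 → Set ℕ} {s' t' : RTEState α 𝒳}

structure MappedClockInv (relETP : 𝒳 → RTState α 𝒳 → Set ℕ) (s' : RTEState α 𝒳) : Prop where
  m_le_clk : ∀ x, s'.m x ≤ s'.st.clk x
  le_m : ∀ x, ∀ n ∈ relETP x s'.st, n ≤ s'.st.clk x → n ≤ s'.m x

namespace MappedClockInv

theorem of_mem_EInit {Init : Set (RTState α 𝒳)} (h : s' ∈ EInit Init) :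
    MappedClockInv relETP s' :=
  ⟨fun x => (h.2 x).le, fun x _ _ hn => (h.2 x).symm ▸ hn⟩

theorem of_ENextI (hClk : ∀ s t, NextI s t → ∀ x, t.clk x = s.clk x)
    (hmono : ∀ s t, NextI s t → ∀ x, ∀ n ∈ relETP x t, n ≤ t.clk x → n ∈ relETP x s)
    (h : MappedClockInv relETP s') (hst : ENextI NextI s' t') : MappedClockInv relETP t' := by
  obtain ⟨hN, hm⟩ := hst
  refine ⟨fun x => ?_, fun x n hn hnc => ?_⟩
  · rw [hm x, hClk _ _ hN x]
    exact h.m_le_clk x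
  · rw [hm x]
    exact h.le_m x n (hmono _ _ hN x n hn hnc) (hClk _ _ hN x ▸ hnc)

theorem of_EAdvanceTime (hrel : ∀ x s t, s.core = t.core → relETP x s = relETP x t)
    (h : MappedClockInv relETP s') (hst : EAdvanceTime B relETP s' t') :
    MappedClockInv relETP t' := by
  obtain ⟨⟨hcore, hclk, -⟩, hm⟩ := hst
  refine ⟨fun x => ?_, fun x n hn hnc => ?_⟩
  · rw [hm x, sSup_singleton_union_sep_le_iff]
    exact ⟨(h.m_le_clk x).trans (hclk x ▸ Nat.le_succ _), fun _ _ => id⟩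
  · rw [hm x]
    exact (sSup_singleton_union_sep_le_iff.1 le_rfl).2 n (hrel x _ _ hcore ▸ hn) hnc

theorem notMem_ETP (hETP : ∀ x s, ETP NextI x s ⊆ relETP x s)
    (hrel : ∀ x s t, s.core = t.core → relETP x s = relETP x t)
    (h : MappedClockInv relETP s') {Y : Set 𝒳} {x : 𝒳} {d : ℕ} (hd : s'.m x < d)
    (hdc : d ≤ s'.st.clk x) : d ∉ ETP NextI x (setClocks Y s'.m s'.st) := fun hd' => by
  have := h.le_m x d (hrel x (setClocks Y s'.m s'.st) s'.st rfl ▸ hETP x _ hd') hdc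
  omega

end MappedClockInv

theorem bar_step_of_ENextI [Finite 𝒳] (hClk : ∀ s t, NextI s t → ∀ x, t.clk x = s.clk x)
    (hETP : ∀ x s, ETP NextI x s ⊆ relETP x s)
    (hrel : ∀ x s t, s.core = t.core → relETP x s = relETP x t)
    (h : MappedClockInv relETP s') (hst : ENextI NextI s' t') :
    NextI (bar s') (bar t') ∨ bar t' = bar s' := by
  let ρ : ℕ → RTState α 𝒳 := fun i => if i = 0 then s'.st else t'.st
  have hρ : ρ ∈ NS NextI := by
    rintro (_ | i)
    exacts [Or.inl hst.1, Or.inr rfl]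
  have h0 : setClocks Set.univ s'.m (ρ 0) = bar s' := setClocks_univ _ _
  have h1 : setClocks Set.univ s'.m (ρ 1) = bar t' := by
    rw [setClocks_univ]
    exact RTState.ext rfl (funext fun x => (hst.2 x).symm)
  rw [← h0, ← h1]
  exact setClocks_mem_NS hClk hρ h.m_le_clk (fun _ _ _ => h.notMem_ETP hETP hrel)
    Set.finite_univ 0

theorem bar_step_of_EAdvanceTime (hB : ∀ x s, {n | ∃ b ∈ B x s, n = b + 1} ⊆ relETP x s)
    (hdep : ∀ x s t, s.core = t.core → B x s = B x t ∧ relETP x s = relETP x t)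
    (h : MappedClockInv relETP s') (hst : EAdvanceTime B relETP s' t') :
    AdvanceTimeHat B relETP (bar s') (bar t') ∨ bar t' = bar s' := by
  obtain ⟨⟨hcore, hclk, hnotB⟩, hm⟩ := hst
  have hle : ∀ x, s'.m x ≤ t'.m x := fun x => by
    rw [hm x]
    exact (sSup_singleton_union_sep_le_iff.1 le_rfl).1
  by_cases hstutter : ∀ x, t'.m x = s'.m x
  · exact Or.inr (RTState.ext hcore (funext hstutter))
  push Not at hstutter
  obtain ⟨y, hy⟩ := hstutter
  refine Or.inl ⟨hcore, ⟨y, (hle y).lt_of_ne hy.symm⟩, fun x => ?_, fun x b hb hmb => ?_⟩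
  · rcases eq_or_ne (t'.m x) (s'.m x) with hx | hx
    · exact Or.inl hx
    refine Or.inr ⟨(hle x).lt_of_ne hx.symm, ?_⟩
    rw [(hdep x (bar s') s'.st rfl).2]
    exact (hm x ▸ sSup_singleton_union_sep_eq_or_mem).resolve_left hx
  · rw [(hdep x (bar s') s'.st rfl).1] at hb
    change s'.m x ≤ b at hmb
    change t'.m x ≤ b
    -- Otherwise `b + 1` would be a relevant ETP already passed by the clock, forcing `b < m^x`.
    have hclk_lt : s'.st.clk x < b := by
      refine lt_of_le_of_ne (not_lt.1 fun hb_lt => ?_) fun he => hnotB x (he ▸ hb)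
      have := h.le_m x (b + 1) (hB x _ ⟨b, hb, rfl⟩) hb_lt
      omega
    rw [hm x, sSup_singleton_union_sep_le_iff]
    refine ⟨hmb, fun n hn hnc => ?_⟩
    rcases le_or_gt n (s'.st.clk x) with hn' | hn'
    · exact (h.le_m x n hn hn').trans hmb
    · have := hclk x
      omega

end RT

theorem extended_implements_barred_optimized_general {α : Type u} {𝒳 : Type v} [Finite 𝒳]
    (Init : Set (RTState α 𝒳)) (NextI : RTState α 𝒳 → RTState α 𝒳 → Prop)
    (B relETP : 𝒳 → RTState α 𝒳 → Set ℕ)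
    (hClk : ∀ s t, NextI s t → ∀ x, t.clk x = s.clk x)
    (hA2 : ∀ (x : 𝒳) (s : RTState α 𝒳), RT.ETP NextI x s ⊆ relETP x s ∧
      { n | ∃ b ∈ B x s, n = b + 1 } ⊆ relETP x s)
    (hA3 : ∀ (x : 𝒳) (s t : RTState α 𝒳), s.core = t.core →
      B x s = B x t ∧ relETP x s = relETP x t)
    (hA4 : ∀ s t, NextI s t → ∀ (x : 𝒳), ∀ n ∈ relETP x t, n ≤ t.clk x → n ∈ relETP x s)
    (σ' : ℕ → RTEState α 𝒳) (hI : σ' 0 ∈ RT.EInit Init)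
    (hσ : ∀ i, RT.ENextI NextI (σ' i) (σ' (i + 1)) ∨
      RT.EAdvanceTime B relETP (σ' i) (σ' (i + 1)) ∨ σ' (i + 1) = σ' i) :
    RT.bar (σ' 0) ∈ Init ∧
      ∀ i, NextI (RT.bar (σ' i)) (RT.bar (σ' (i + 1))) ∨
        RT.AdvanceTimeHat B relETP (RT.bar (σ' i)) (RT.bar (σ' (i + 1))) ∨
        RT.bar (σ' (i + 1)) = RT.bar (σ' i) := by
  have hrel x s t (h : s.core = t.core) := (hA3 x s t h).2
  have hinv : ∀ i, RT.MappedClockInv relETP (σ' i) := by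
    intro i
    induction i with
    | zero => exact .of_mem_EInit hI
    | succ i ih =>
      rcases hσ i with h | h | h
      · exact ih.of_ENextI hClk hA4 h
      · exact ih.of_EAdvanceTime hrel h
      · exact h ▸ ih
  refine ⟨?_, fun i => ?_⟩
  · have hbar : RT.bar (σ' 0) = (σ' 0).st := RTState.ext rfl (funext hI.2)
    exact hbar ▸ hI.1
  rcases hσ i with h | h | h
  · exact (RT.bar_step_of_ENextI hClk (fun x s => (hA2 x s).1) hrel (hinv i) h).imp_right Or.inr
  · exact Or.inr (RT.bar_step_of_EAdvanceTime (fun x s => (hA2 x s).2) hA3 (hinv i) h)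
  · exact Or.inr (Or.inr (by rw [h]))

theorem extended_implements_barred_optimized {α : Type u} {𝒳 : Type v} [Finite 𝒳]
    (Init : Set (RTState α 𝒳)) (NextI : RTState α 𝒳 → RTState α 𝒳 → Prop)
    (B relETP : 𝒳 → RTState α 𝒳 → Set ℕ)
    (hClk : ∀ s t, NextI s t → ∀ x, t.clk x = s.clk x)
    (hA1 : ∀ (x : 𝒳) (d : ℕ) (s : RTState α 𝒳), B x (RT.T x d s) = B x s)
    (hA2 : ∀ (x : 𝒳) (s : RTState α 𝒳), RT.ETP NextI x s ⊆ relETP x s ∧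
      { n | ∃ b ∈ B x s, n = b + 1 } ⊆ relETP x s)
    (hA3 : ∀ (x : 𝒳) (s t : RTState α 𝒳), s.core = t.core →
      B x s = B x t ∧ relETP x s = relETP x t)
    (hA4 : ∀ s t, NextI s t → ∀ (x : 𝒳), ∀ n ∈ relETP x t, n ≤ t.clk x → n ∈ relETP x s)
    (σ' : ℕ → RTEState α 𝒳) (hI : σ' 0 ∈ RT.EInit Init)
    (hσ : ∀ i, RT.ENextI NextI (σ' i) (σ' (i + 1)) ∨
      RT.EAdvanceTime B relETP (σ' i) (σ' (i + 1)) ∨ σ' (i + 1) = σ' i) :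
    RT.bar (σ' 0) ∈ Init ∧
      ∀ i, NextI (RT.bar (σ' i)) (RT.bar (σ' (i + 1))) ∨
        RT.AdvanceTimeHat B relETP (RT.bar (σ' i)) (RT.bar (σ' (i + 1))) ∨
        RT.bar (σ' (i + 1)) = RT.bar (σ' i) :=
  extended_implements_barred_optimized_general Init NextI B relETP hClk hA2 hA3 hA4 σ' hI hσ
end

section
/- Downward translation after an internal step: let (s', t') be a NextI' step, x a clock, and n ∈ ℕ with n < s'.x and (n : ℕ ∪ {∞}) < n^x(s'). Then every behavior σ ∈ N_{S'} with σ 0 = T'^x_{s'.x − n}(t') satisfies 𝒯'^x_{s'.x − n − 1}(σ) ∈ N_{S'}. -/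
open scoped Classical

universe u v

/-!
Prepending `T'^x_{s'.x-n}(s')` to `σ` gives a behavior in `N_{S'}` starting at `T'^x_{s'.x-n}(s')`,
as long as the translated internal step is still a step; since `n < n^x(s')`, that behavior can be
lowered by one, and so can its tail `σ`. The translated step survives by induction on the level,
each lowering being that of the behavior `s', t', t', …` translated to the current level.
-/

namespace RT

variable {α : Type u} {𝒳 : Type v}

def cons (s' : RTEState α 𝒳) (σ : ℕ → RTEState α 𝒳) : ℕ → RTEState α 𝒳
  | 0 => s'
  | i + 1 => σ i

@[simp]
theorem ET_ET (x : 𝒳) (d e : ℕ) (s' : RTEState α 𝒳) : ET x d (ET x e s') = ET x d s' := by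
  simp only [ET, T]
  congr
  grind

theorem ET_clk_self (x : 𝒳) (s' : RTEState α 𝒳) : ET x (s'.st.clk x) s' = s' := by
  simp only [ET, T]
  congr
  grind

theorem ETb_cons (x : 𝒳) (d : ℕ) (s' : RTEState α 𝒳) (σ : ℕ → RTEState α 𝒳) :
    ETb x d (cons s' σ) = cons (ET x d s') (ETb x d σ) := by
  funext i
  cases i <;> rfl

theorem cons_mem_ENS_iff (NextI : RTState α 𝒳 → RTState α 𝒳 → Prop) (s' : RTEState α 𝒳)
    (σ : ℕ → RTEState α 𝒳) :
    cons s' σ ∈ ENS NextI ↔ (ENextI NextI s' (σ 0) ∨ σ 0 = s') ∧ σ ∈ ENS NextI :=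
  ⟨fun h => ⟨h 0, fun i => h (i + 1)⟩, fun ⟨h₀, h⟩ i => i.casesOn h₀ h⟩

theorem const_mem_ENS (NextI : RTState α 𝒳 → RTState α 𝒳 → Prop) (t' : RTEState α 𝒳) :
    (fun _ => t') ∈ ENS NextI :=
  fun _ => Or.inr rfl

theorem ETb_mem_ENS_of_lt_nfun {NextI : RTState α 𝒳 → RTState α 𝒳 → Prop} {x : 𝒳}
    {s' : RTEState α 𝒳} {m : ℕ} (hm : (m : ℕ∞) < nfun NextI x s') :
    ∀ τ ∈ ENS NextI, τ 0 = ET x (s'.st.clk x - m) s' →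
      ETb x (s'.st.clk x - m - 1) τ ∈ ENS NextI := by
  by_contra! hwit
  exact hm.not_ge (sInf_le ⟨m, hwit, rfl⟩)

theorem ENextI_or_eq_ET_sub_one {NextI : RTState α 𝒳 → RTState α 𝒳 → Prop} {x : 𝒳}
    {s' t' : RTEState α 𝒳} {m : ℕ} (hm : (m : ℕ∞) < nfun NextI x s')
    (hstep : ENextI NextI (ET x (s'.st.clk x - m) s') (ET x (s'.st.clk x - m) t') ∨
      ET x (s'.st.clk x - m) t' = ET x (s'.st.clk x - m) s') :
    ENextI NextI (ET x (s'.st.clk x - m - 1) s') (ET x (s'.st.clk x - m - 1) t') ∨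
      ET x (s'.st.clk x - m - 1) t' = ET x (s'.st.clk x - m - 1) s' := by
  have hρ := (cons_mem_ENS_iff NextI _ _).2
    ⟨hstep, const_mem_ENS NextI (ET x (s'.st.clk x - m) t')⟩
  have hlowered := ETb_mem_ENS_of_lt_nfun hm _ hρ rfl
  rw [ETb_cons, cons_mem_ENS_iff] at hlowered
  simpa only [ETb, ET_ET] using hlowered.1

theorem ENextI_or_eq_ET_of_lt_nfun {NextI : RTState α 𝒳 → RTState α 𝒳 → Prop} {x : 𝒳}
    {s' t' : RTEState α 𝒳} (h : ENextI NextI s' t') (hx : t'.st.clk x = s'.st.clk x) :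
    ∀ {m : ℕ}, (m : ℕ∞) < nfun NextI x s' →
      ENextI NextI (ET x (s'.st.clk x - m) s') (ET x (s'.st.clk x - m) t') ∨
        ET x (s'.st.clk x - m) t' = ET x (s'.st.clk x - m) s'
  | 0, _ => by
    left
    rwa [Nat.sub_zero, ET_clk_self, ← hx, ET_clk_self]
  | m + 1, hm => by
    have hm' : (m : ℕ∞) < nfun NextI x s' := lt_of_le_of_lt (by exact_mod_cast m.le_succ) hm
    rw [← Nat.sub_sub]
    exact ENextI_or_eq_ET_sub_one hm' (ENextI_or_eq_ET_of_lt_nfun h hx hm')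

end RT

theorem downward_translation_after_internal_step_general {α : Type u} {𝒳 : Type v}
    (NextI : RTState α 𝒳 → RTState α 𝒳 → Prop)
    (hClk : ∀ s t, NextI s t → ∀ x, t.clk x = s.clk x)
    (s' t' : RTEState α 𝒳) (h : RT.ENextI NextI s' t')
    (x : 𝒳) (n : ℕ) (h2 : (n : ℕ∞) < RT.nfun NextI x s') :
    ∀ σ ∈ RT.ENS NextI, σ 0 = RT.ET x (s'.st.clk x - n) t' →
      RT.ETb x (s'.st.clk x - n - 1) σ ∈ RT.ENS NextI := by
  intro σ hσ hσ0
  have hstep := RT.ENextI_or_eq_ET_of_lt_nfun h (hClk _ _ h.1 x) h2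
  have hτ : RT.cons (RT.ET x (s'.st.clk x - n) s') σ ∈ RT.ENS NextI :=
    (RT.cons_mem_ENS_iff NextI _ _).2 ⟨hσ0 ▸ hstep, hσ⟩
  have hlowered := RT.ETb_mem_ENS_of_lt_nfun h2 _ hτ rfl
  rw [RT.ETb_cons, RT.cons_mem_ENS_iff] at hlowered
  exact hlowered.2

theorem downward_translation_after_internal_step {α : Type u} {𝒳 : Type v}
    (NextI : RTState α 𝒳 → RTState α 𝒳 → Prop)
    (hClk : ∀ s t, NextI s t → ∀ x, t.clk x = s.clk x)
    (s' t' : RTEState α 𝒳) (h : RT.ENextI NextI s' t')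
    (x : 𝒳) (n : ℕ) (h1 : n < s'.st.clk x) (h2 : (n : ℕ∞) < RT.nfun NextI x s') :
    ∀ σ ∈ RT.ENS NextI, σ 0 = RT.ET x (s'.st.clk x - n) t' →
      RT.ETb x (s'.st.clk x - n - 1) σ ∈ RT.ENS NextI :=
  downward_translation_after_internal_step_general NextI hClk s' t' h x n h2
end
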